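/- Let d ≥ 1, m ∈ ℕ, and let V : ℝ^d → ℝ be of class C^m with all partial derivatives of order ≤ m bounded. There exists a constant C ∈ (0,∞), depending only on m, d, and ‖V‖_{C^m}, such that for all u, h : ℝ^d → ℂ of class C^m with all partial derivatives of order ≤ m in L², the function x ↦ (V ⋆ |u|²)(x) h(x) + 2 (V ⋆ Re(ū h))(x) u(x) (which is the first derivative Ψ₀'(u).h of Ψ₀(u) = (V ⋆ |u|²)u at u in direction h) satisfies ‖(V ⋆ |u|²) h + 2 (V ⋆ Re(ū h)) u‖_{H^m} ≤ C ‖u‖_{L²} ‖u‖_{H^m} ‖h‖_{H^m}. -/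

import Mathlib

open MeasureTheory Filter
open scoped ENNReal NNReal BigOperators Topology

noncomputable section

/-- Partial derivative in coordinate direction `i`. -/
def pd {d : ℕ} {E : Type*} [NormedAddCommGroup E] [NormedSpace ℝ E]
    (i : Fin d) (f : (Fin d → ℝ) → E) : (Fin d → ℝ) → E :=
  fun x => fderiv ℝ f x (Pi.single i 1)

/-- Iterated partial derivative associated with the multi-index `α`. -/
def md {d : ℕ} {E : Type*} [NormedAddCommGroup E] [NormedSpace ℝ E]
    (α : Fin d → ℕ) (f : (Fin d → ℝ) → E) : (Fin d → ℝ) → E :=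
  (List.finRange d).foldr (fun i g => (pd i)^[α i] g) f

/-- L² norm on ℝ^d. -/
def l2norm {d : ℕ} {E : Type*} [NormedAddCommGroup E]
    (f : (Fin d → ℝ) → E) : ℝ :=
  (eLpNorm f 2 (volume : Measure (Fin d → ℝ))).toReal

/-- Sobolev `H^m` norm. -/
def hnorm (d m : ℕ) {E : Type*} [NormedAddCommGroup E] [NormedSpace ℝ E]
    (f : (Fin d → ℝ) → E) : ℝ :=
  Real.sqrt (∑ α : Fin d → Fin (m + 1),
    if (∑ i, (α i : ℕ)) ≤ m then (l2norm (md (fun i => (α i : ℕ)) f)) ^ 2 else 0)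

/-- `C^m` norm: sup over multi-indices of order at most `m` and over points. -/
def cnorm (d m : ℕ) {E : Type*} [NormedAddCommGroup E] [NormedSpace ℝ E]
    (f : (Fin d → ℝ) → E) : ℝ :=
  ⨆ α : Fin d → Fin (m + 1), ⨆ x : Fin d → ℝ,
    if (∑ i, (α i : ℕ)) ≤ m then ‖md (fun i => (α i : ℕ)) f x‖ else 0

/-- `f` is of class `C^m` with all partial derivatives of order at most `m` bounded. -/
def ContDiffBdd (d m : ℕ) {E : Type*} [NormedAddCommGroup E] [NormedSpace ℝ E]
    (f : (Fin d → ℝ) → E) : Prop :=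
  ContDiff ℝ m f ∧ ∀ α : Fin d → ℕ, (∑ i, α i) ≤ m → ∃ B : ℝ, ∀ x, ‖md α f x‖ ≤ B

/-- `f` is of class `C^m` with all partial derivatives of order at most `m` in `L²`. -/
def ContDiffL2 (d m : ℕ) {E : Type*} [NormedAddCommGroup E] [NormedSpace ℝ E]
    (f : (Fin d → ℝ) → E) : Prop :=
  ContDiff ℝ m f ∧ ∀ α : Fin d → ℕ, (∑ i, α i) ≤ m →
    MemLp (md α f) 2 (volume : Measure (Fin d → ℝ))

/-- Fourier transform with kernel `exp(-2πi⟨x,ζ⟩)`. -/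
def ftrans {d : ℕ} (f : (Fin d → ℝ) → ℂ) (ζ : Fin d → ℝ) : ℂ :=
  ∫ x : Fin d → ℝ, Complex.exp (-(2 * Real.pi * Complex.I * (∑ i, x i * ζ i))) * f x

end


/-!
The expression equals `(w₁ ⋆ V) • h + (w₂ ⋆ V) • u` with weights `w₁ = |u|²` and
`w₂ = 2 Re(ū h)`. By the Leibniz rule, `∂^γ((w ⋆ V) • f)` is a sum of at most `2^m` terms
`∂^a(w ⋆ V) • ∂^b f`, and all derivatives of the convolution fall on the kernel:
`∂^a(w ⋆ V) = w ⋆ ∂^a V`, which is bounded by `‖V‖_{C^m} ‖w‖_{L¹}`. By Cauchy–Schwarz,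
`‖w₁‖_{L¹} ≤ ‖u‖_{L²}²` and `‖w₂‖_{L¹} ≤ 2 ‖u‖_{L²} ‖h‖_{L²}`, and `‖·‖_{L²} ≤ ‖·‖_{H^m}`.
-/

open scoped Convolution

noncomputable section

variable {d : ℕ} {E : Type*} [NormedAddCommGroup E] [NormedSpace ℝ E]

def pdList (ℓ : List (Fin d)) (f : (Fin d → ℝ) → E) : (Fin d → ℝ) → E :=
  ℓ.foldr pd f

@[simp] lemma pdList_nil (f : (Fin d → ℝ) → E) : pdList [] f = f := rfl

@[simp] lemma pdList_cons (j : Fin d) (ℓ : List (Fin d)) (f : (Fin d → ℝ) → E) :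
    pdList (j :: ℓ) f = pd j (pdList ℓ f) := rfl

lemma pdList_append (ℓ₁ ℓ₂ : List (Fin d)) (f : (Fin d → ℝ) → E) :
    pdList (ℓ₁ ++ ℓ₂) f = pdList ℓ₁ (pdList ℓ₂ f) :=
  List.foldr_append

lemma pdList_replicate (n : ℕ) (i : Fin d) (f : (Fin d → ℝ) → E) :
    pdList (List.replicate n i) f = (pd i)^[n] f := by
  induction n with
  | zero => rfl
  | succ n ih => rw [List.replicate_succ, pdList_cons, ih, Function.iterate_succ_apply']

def multiIndexList (α : Fin d → ℕ) : List (Fin d) :=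
  (List.finRange d).flatMap fun i => List.replicate (α i) i

lemma md_eq_pdList (α : Fin d → ℕ) (f : (Fin d → ℝ) → E) :
    md α f = pdList (multiIndexList α) f := by
  unfold md multiIndexList
  induction List.finRange d with
  | nil => rfl
  | cons j L ih => simp [List.flatMap_cons, pdList_append, pdList_replicate, ih]

@[simp] lemma md_zero (f : (Fin d → ℝ) → E) : md (fun _ => 0) f = f := by
  unfold md
  induction List.finRange d <;> simp_all

lemma length_multiIndexList (α : Fin d → ℕ) : (multiIndexList α).length = ∑ i, α i := by
  simp [multiIndexList, List.length_flatMap, Fin.sum_univ_def]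

lemma count_multiIndexList (α : Fin d → ℕ) (a : Fin d) : (multiIndexList α).count a = α a := by
  rw [multiIndexList, List.count_flatMap, ← Fin.sum_univ_def]
  simp [List.count_replicate]

lemma sum_count_eq_length (ℓ : List (Fin d)) : ∑ i, ℓ.count i = ℓ.length := by
  simpa using Multiset.sum_count_eq_card (s := Finset.univ) (m := (ℓ : Multiset (Fin d))) (by simp)

lemma multiIndexList_count_perm (ℓ : List (Fin d)) :
    (multiIndexList fun i => ℓ.count i).Perm ℓ :=
  List.perm_iff_count.2 fun a => count_multiIndexList _ a

lemma ContDiff.pd {n : ℕ} {f : (Fin d → ℝ) → E} (hf : ContDiff ℝ (n + 1) f) (j : Fin d) :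
    ContDiff ℝ n (pd j f) :=
  (hf.fderiv_right le_rfl).clm_apply contDiff_const

lemma ContDiff.pdList {m : ℕ} {f : (Fin d → ℝ) → E} (hf : ContDiff ℝ m f) (ℓ : List (Fin d))
    {k : ℕ} (hk : ℓ.length + k ≤ m) : ContDiff ℝ k (pdList ℓ f) := by
  induction ℓ generalizing k with
  | nil => exact hf.of_le (by exact_mod_cast (by simpa using hk : k ≤ m))
  | cons j ℓ ih => exact (ih (k := k + 1) (by simp at hk; omega)).pd j

lemma pd_comm {f : (Fin d → ℝ) → E} (hf : ContDiff ℝ 2 f) (i j : Fin d) :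
    pd i (pd j f) = pd j (pd i f) := by
  have hdf : Differentiable ℝ (fderiv ℝ f) :=
    (hf.fderiv_right (m := 1) (by norm_num)).differentiable one_ne_zero
  have apply_fderiv (v w : Fin d → ℝ) (x : Fin d → ℝ) :
      fderiv ℝ (fun y => fderiv ℝ f y w) x v = fderiv ℝ (fderiv ℝ f) x v w := by
    rw [fderiv_clm_apply (hdf x) (differentiableAt_const w)]
    simp
  funext x
  change fderiv ℝ (fun y => fderiv ℝ f y _) x _ = fderiv ℝ (fun y => fderiv ℝ f y _) x _
  rw [apply_fderiv, apply_fderiv]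
  exact second_derivative_symmetric (fun y => (hf.differentiable two_ne_zero y).hasFDerivAt)
    (hdf x).hasFDerivAt _ _

lemma pdList_perm {m : ℕ} {f : (Fin d → ℝ) → E} (hf : ContDiff ℝ m f)
    {ℓ ℓ' : List (Fin d)} (hp : ℓ.Perm ℓ') (hℓ : ℓ.length ≤ m) : pdList ℓ f = pdList ℓ' f := by
  induction hp with
  | nil => rfl
  | cons j _ ih => simp only [pdList_cons, ih (by simp at hℓ; omega)]
  | swap i j ℓ =>
      simp only [pdList_cons]
      exact pd_comm (by exact_mod_cast hf.pdList ℓ (k := 2) (by simp at hℓ; omega)) j i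
  | trans h₁₂ _ ih₁ ih₂ => rw [ih₁ hℓ, ih₂ (h₁₂.length_eq ▸ hℓ)]

lemma pdList_eq_md {m : ℕ} {f : (Fin d → ℝ) → E} (hf : ContDiff ℝ m f)
    (ℓ : List (Fin d)) (hℓ : ℓ.length ≤ m) : pdList ℓ f = md (fun i => ℓ.count i) f := by
  rw [md_eq_pdList]
  exact pdList_perm hf (multiIndexList_count_perm ℓ).symm hℓ

section Leibniz

variable {f g : (Fin d → ℝ) → E}

-- Weaker than `ContDiff ℝ n`, but enough for the Leibniz rule, and easy to check for `w ⋆ V`.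
def PartialsDifferentiable (n : ℕ) (f : (Fin d → ℝ) → E) : Prop :=
  ∀ ℓ : List (Fin d), ℓ.length < n → Differentiable ℝ (pdList ℓ f)

lemma ContDiff.partialsDifferentiable {n : ℕ} (hf : ContDiff ℝ n f) :
    PartialsDifferentiable n f :=
  fun ℓ hℓ => (hf.pdList ℓ (k := 1) hℓ).differentiable one_ne_zero

lemma pd_add (hf : Differentiable ℝ f) (hg : Differentiable ℝ g) (j : Fin d) :
    pd j (f + g) = pd j f + pd j g := by
  funext x
  simp [pd, fderiv_add (hf x) (hg x)]

lemma pdList_add {n : ℕ} (hf : PartialsDifferentiable n f) (hg : PartialsDifferentiable n g)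
    (ℓ : List (Fin d)) (hℓ : ℓ.length ≤ n) : pdList ℓ (f + g) = pdList ℓ f + pdList ℓ g := by
  induction ℓ with
  | nil => rfl
  | cons j ℓ ih =>
      simp only [List.length_cons] at hℓ
      rw [pdList_cons, ih (by omega), pd_add (hf ℓ (by omega)) (hg ℓ (by omega))]
      rfl

lemma differentiable_list_sum {L : List ((Fin d → ℝ) → E)}
    (hL : ∀ f ∈ L, Differentiable ℝ f) : Differentiable ℝ L.sum := by
  induction L with
  | nil => exact differentiable_const 0
  | cons f L ih =>
      simp only [List.forall_mem_cons] at hL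
      exact hL.1.add (ih hL.2)

lemma pd_list_sum (j : Fin d) {L : List ((Fin d → ℝ) → E)}
    (hL : ∀ f ∈ L, Differentiable ℝ f) : pd j L.sum = (L.map (pd j)).sum := by
  induction L with
  | nil => funext x; simp [pd]
  | cons f L ih =>
      simp only [List.forall_mem_cons] at hL
      rw [List.sum_cons, pd_add hL.1 (differentiable_list_sum hL.2), ih hL.2]
      rfl

def bipartitions {α : Type*} : List α → List (List α × List α)
  | [] => [([], [])]
  | j :: ℓ => (bipartitions ℓ).flatMap fun p => [(j :: p.1, p.2), (p.1, j :: p.2)]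

lemma length_add_length_of_mem_bipartitions {α : Type*} {ℓ : List α} {p : List α × List α}
    (hp : p ∈ bipartitions ℓ) : p.1.length + p.2.length = ℓ.length := by
  induction ℓ generalizing p with
  | nil => simp_all [bipartitions]
  | cons j ℓ ih =>
      simp only [bipartitions, List.mem_flatMap, List.mem_cons,
        List.not_mem_nil, or_false] at hp
      obtain ⟨q, hq, rfl | rfl⟩ := hp <;> simp [← ih hq] <;> omega

lemma length_bipartitions {α : Type*} (ℓ : List α) :
    (bipartitions ℓ).length = 2 ^ ℓ.length := by
  induction ℓ with
  | nil => rfl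
  | cons j ℓ ih => simp [bipartitions, List.length_flatMap, ih, pow_succ]

lemma pd_smul {φ : (Fin d → ℝ) → ℝ} (hφ : Differentiable ℝ φ) (hf : Differentiable ℝ f)
    (j : Fin d) : pd j (φ • f) = pd j φ • f + φ • pd j f := by
  funext x
  simp [pd, fderiv_smul (hφ x) (hf x), add_comm]

lemma differentiable_of_mem_bipartitions_map {n : ℕ} {φ : (Fin d → ℝ) → ℝ}
    (hφ : PartialsDifferentiable n φ) (hf : PartialsDifferentiable n f) {ℓ : List (Fin d)}
    (hℓ : ℓ.length < n) :
    ∀ g ∈ (bipartitions ℓ).map (fun p => pdList p.1 φ • pdList p.2 f), Differentiable ℝ g := by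
  simp only [List.mem_map]
  rintro _ ⟨p, hp, rfl⟩
  have := length_add_length_of_mem_bipartitions hp
  exact (hφ p.1 (by omega)).smul (hf p.2 (by omega))

lemma pdList_smul {n : ℕ} {φ : (Fin d → ℝ) → ℝ} (hφ : PartialsDifferentiable n φ)
    (hf : PartialsDifferentiable n f) (ℓ : List (Fin d)) (hℓ : ℓ.length ≤ n) :
    pdList ℓ (φ • f) = ((bipartitions ℓ).map fun p => pdList p.1 φ • pdList p.2 f).sum := by
  induction ℓ with
  | nil => simp [bipartitions]
  | cons j ℓ ih =>
      simp only [List.length_cons] at hℓ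
      rw [pdList_cons, ih (by omega),
        pd_list_sum j (differentiable_of_mem_bipartitions_map hφ hf (by omega))]
      have hterm : ∀ p ∈ bipartitions ℓ, (pd j ∘ fun p => pdList p.1 φ • pdList p.2 f) p =
          pdList (j :: p.1) φ • pdList p.2 f + pdList p.1 φ • pdList (j :: p.2) f := by
        intro p hp
        have := length_add_length_of_mem_bipartitions hp
        exact pd_smul (hφ p.1 (by omega)) (hf p.2 (by omega)) j
      rw [List.map_map, List.map_congr_left hterm]
      simp [bipartitions, List.flatMap, Function.comp_def, List.sum_map_add]

lemma PartialsDifferentiable.smul {n : ℕ} {φ : (Fin d → ℝ) → ℝ}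
    (hφ : PartialsDifferentiable n φ) (hf : PartialsDifferentiable n f) :
    PartialsDifferentiable n (φ • f) := fun ℓ hℓ => by
  rw [pdList_smul hφ hf ℓ hℓ.le]
  exact differentiable_list_sum (differentiable_of_mem_bipartitions_map hφ hf hℓ)

end Leibniz

section SobolevNorm

variable {m : ℕ} {f : (Fin d → ℝ) → E}

lemma l2norm_nonneg {F : Type*} [NormedAddCommGroup F] (f : (Fin d → ℝ) → F) :
    0 ≤ l2norm f :=
  ENNReal.toReal_nonneg

lemma hnorm_nonneg (f : (Fin d → ℝ) → E) : 0 ≤ hnorm d m f := Real.sqrt_nonneg _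

lemma lt_succ_of_sum_le {β : Fin d → ℕ} (hβ : ∑ i, β i ≤ m) (i : Fin d) : β i < m + 1 :=
  Nat.lt_succ_of_le ((Finset.single_le_sum (fun _ _ => Nat.zero_le _) (Finset.mem_univ i)).trans hβ)

lemma l2norm_md_le_hnorm (f : (Fin d → ℝ) → E) {β : Fin d → ℕ} (hβ : ∑ i, β i ≤ m) :
    l2norm (md β f) ≤ hnorm d m f := by
  set term : (Fin d → Fin (m + 1)) → ℝ := fun α =>
    if ∑ i, (α i : ℕ) ≤ m then l2norm (md (fun i => (α i : ℕ)) f) ^ 2 else 0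
  let α : Fin d → Fin (m + 1) := fun i => ⟨β i, lt_succ_of_sum_le hβ i⟩
  have hα : term α = l2norm (md β f) ^ 2 := if_pos hβ
  rw [hnorm, ← Real.sqrt_sq (l2norm_nonneg _), ← hα]
  exact Real.sqrt_le_sqrt (Finset.single_le_sum (fun γ _ => by positivity) (Finset.mem_univ α))

lemma l2norm_le_hnorm (f : (Fin d → ℝ) → E) : l2norm f ≤ hnorm d m f := by
  simpa using l2norm_md_le_hnorm f (β := fun _ => 0) (m := m) (by simp)

lemma ContDiffL2.memLp (hf : ContDiffL2 d m f) : MemLp f 2 volume := by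
  simpa using hf.2 (fun _ => 0) (by simp)

lemma ContDiffL2.eLpNorm_pdList_le (hf : ContDiffL2 d m f) (ℓ : List (Fin d))
    (hℓ : ℓ.length ≤ m) : eLpNorm (pdList ℓ f) 2 volume ≤ ENNReal.ofReal (hnorm d m f) := by
  have hcount : ∑ i, ℓ.count i ≤ m := by rwa [sum_count_eq_length]
  rw [pdList_eq_md hf.1 ℓ hℓ,
    ENNReal.le_ofReal_iff_toReal_le (hf.2 _ hcount).2.ne (hnorm_nonneg f)]
  exact l2norm_md_le_hnorm f hcount

lemma hnorm_le_of_eLpNorm_md_le {R : ℝ} (hR : 0 ≤ R)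
    (h : ∀ β : Fin d → ℕ, ∑ i, β i ≤ m → eLpNorm (md β f) 2 volume ≤ ENNReal.ofReal R) :
    hnorm d m f ≤ √((m + 1) ^ d) * R := by
  have hterm (α : Fin d → Fin (m + 1)) :
      (if ∑ i, (α i : ℕ) ≤ m then l2norm (md (fun i => (α i : ℕ)) f) ^ 2 else 0) ≤ R ^ 2 := by
    split_ifs with hα
    · exact pow_le_pow_left₀ (l2norm_nonneg _)
        (ENNReal.toReal_le_of_le_ofReal hR (h _ hα)) 2
    · positivity
  calc hnorm d m f ≤ √(∑ _α : Fin d → Fin (m + 1), R ^ 2) :=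
        Real.sqrt_le_sqrt (Finset.sum_le_sum fun α _ => hterm α)
    _ = √((m + 1) ^ d) * R := by
        simp [Real.sqrt_mul (by positivity : (0 : ℝ) ≤ (m + 1) ^ d), Real.sqrt_sq hR]

lemma aestronglyMeasurable_pdList [CompleteSpace E] [MeasurableSpace E] [BorelSpace E]
    [SecondCountableTopology E] (hf : AEStronglyMeasurable f volume) (ℓ : List (Fin d)) :
    AEStronglyMeasurable (pdList ℓ f) volume := by
  cases ℓ with
  | nil => exact hf
  | cons j ℓ => exact (measurable_fderiv_apply_const ℝ _ _).aestronglyMeasurable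

lemma ContDiffBdd.exists_bound_pdList {V : (Fin d → ℝ) → E} (hV : ContDiffBdd d m V) :
    ∃ A, 0 < A ∧ ∀ ℓ : List (Fin d), ℓ.length ≤ m → ∀ x, ‖pdList ℓ V x‖ ≤ A := by
  have hB (α : Fin d → Fin (m + 1)) :
      ∃ B : ℝ, ∑ i, (α i : ℕ) ≤ m → ∀ x, ‖md (fun i => (α i : ℕ)) V x‖ ≤ B := by
    by_cases hα : ∑ i, (α i : ℕ) ≤ m
    · exact (hV.2 _ hα).imp fun _ hB _ => hB
    · exact ⟨0, fun h => absurd h hα⟩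
  choose B hB using hB
  obtain ⟨A, hA⟩ := Finite.exists_le B
  refine ⟨max A 1, by positivity, fun ℓ hℓ x => ?_⟩
  have hcount : ∑ i, ℓ.count i ≤ m := by rwa [sum_count_eq_length]
  rw [pdList_eq_md hV.1 ℓ hℓ]
  exact (hB (fun i => ⟨ℓ.count i, lt_succ_of_sum_le hcount i⟩) hcount x).trans
    ((hA _).trans (le_max_left _ _))

end SobolevNorm

section Convolution

variable {w : (Fin d → ℝ) → ℝ} {V : (Fin d → ℝ) → E} {B : ℝ}

lemma convolutionExists_of_norm_le (hw : Integrable w) (hV : AEStronglyMeasurable V)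
    (hB : ∀ x, ‖V x‖ ≤ B) : ConvolutionExists w V (ContinuousLinearMap.lsmul ℝ ℝ) volume :=
  fun x => (hw.norm.mul_const B).mono'
    (hw.aestronglyMeasurable.convolution_integrand_snd _ hV x)
    (ae_of_all _ fun t => by
      simpa [norm_smul] using mul_le_mul_of_nonneg_left (hB (x - t)) (norm_nonneg (w t)))

lemma norm_convolution_le (hw : Integrable w) (hB : ∀ x, ‖V x‖ ≤ B) (x : Fin d → ℝ) :
    ‖(w ⋆ V) x‖ ≤ B * ∫ y, ‖w y‖ := by
  rw [convolution_def, ← integral_const_mul]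
  refine norm_integral_le_of_norm_le (hw.norm.const_mul B) (ae_of_all _ fun t => ?_)
  simpa [norm_smul, mul_comm] using mul_le_mul_of_nonneg_left (hB (x - t)) (norm_nonneg (w t))

lemma norm_fderiv_le_of_norm_pd_le {g : (Fin d → ℝ) → E} {x : Fin d → ℝ} {C : ℝ} (hC0 : 0 ≤ C)
    (hC : ∀ i, ‖pd i g x‖ ≤ C) : ‖fderiv ℝ g x‖ ≤ d * C := by
  refine ContinuousLinearMap.opNorm_le_bound _ (by positivity) fun v => ?_
  have hv : fderiv ℝ g x v = ∑ i, v i • pd i g x := by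
    conv_lhs => rw [← Finset.univ_sum_single v]
    refine (map_sum _ _ _).trans (Finset.sum_congr rfl fun i _ => ?_)
    rw [pd, ← map_smul, ← Pi.single_smul, smul_eq_mul, mul_one]
  calc ‖fderiv ℝ g x v‖ ≤ ∑ i : Fin d, ‖v‖ * C := by
        rw [hv]
        refine (norm_sum_le _ _).trans (Finset.sum_le_sum fun i _ => ?_)
        rw [norm_smul]
        exact mul_le_mul (norm_le_pi_norm v i) (hC i) (norm_nonneg _) (norm_nonneg _)
    _ = d * C * ‖v‖ := by simp; ring

lemma hasFDerivAt_convolution [CompleteSpace E] (hw : Integrable w) (hV : ContDiff ℝ 1 V)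
    (hB : ∀ x, ‖V x‖ ≤ B) {L : ℝ} (hL : ∀ x, ‖fderiv ℝ V x‖ ≤ L) (x₀ : Fin d → ℝ) :
    HasFDerivAt (w ⋆ V) ((w ⋆ fderiv ℝ V) x₀) x₀ := by
  have hV' : Continuous (fderiv ℝ V) := hV.continuous_fderiv one_ne_zero
  simp only [convolution_def]
  refine hasFDerivAt_integral_of_dominated_of_fderiv_le (bound := fun t => ‖w t‖ * L)
    (F := fun x t => ContinuousLinearMap.lsmul ℝ ℝ (w t) (V (x - t)))
    (F' := fun x t => ContinuousLinearMap.lsmul ℝ ℝ (w t) (fderiv ℝ V (x - t))) Filter.univ_mem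
    (Eventually.of_forall fun x =>
      hw.aestronglyMeasurable.convolution_integrand_snd _ hV.continuous.aestronglyMeasurable x)
    (convolutionExists_of_norm_le hw hV.continuous.aestronglyMeasurable hB x₀)
    (hw.aestronglyMeasurable.convolution_integrand_snd _ hV'.aestronglyMeasurable x₀)
    (ae_of_all _ fun t x _ => ?_) (hw.norm.mul_const L) (ae_of_all _ fun t x _ => ?_)
  · simpa [norm_smul] using mul_le_mul_of_nonneg_left (hL (x - t)) (norm_nonneg (w t))
  · have := ((hV.differentiable one_ne_zero (x - t)).hasFDerivAt.comp x
      ((hasFDerivAt_id x).sub_const t)).fun_const_smul (w t)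
    simpa [Function.comp_def] using this

lemma pd_convolution [CompleteSpace E] (hw : Integrable w) (hV : ContDiff ℝ 1 V)
    (hB : ∀ x, ‖V x‖ ≤ B) {L : ℝ} (hL : ∀ x, ‖fderiv ℝ V x‖ ≤ L) (j : Fin d) :
    pd j (w ⋆ V) = w ⋆ pd j V := by
  funext x
  have hV' := (hV.continuous_fderiv one_ne_zero).aestronglyMeasurable (μ := volume)
  rw [pd, (hasFDerivAt_convolution hw hV hB hL x).fderiv, convolution_def,
    ContinuousLinearMap.integral_apply (convolutionExists_of_norm_le hw hV' hL x),
    convolution_def]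
  rfl

variable {m : ℕ} {A : ℝ}

lemma norm_fderiv_pdList_le (hA : ∀ ℓ : List (Fin d), ℓ.length ≤ m → ∀ x, ‖pdList ℓ V x‖ ≤ A)
    (ℓ : List (Fin d)) (hℓ : ℓ.length < m) (x : Fin d → ℝ) :
    ‖fderiv ℝ (pdList ℓ V) x‖ ≤ d * A :=
  norm_fderiv_le_of_norm_pd_le ((norm_nonneg _).trans (hA [] (Nat.zero_le _) x))
    fun i => hA (i :: ℓ) hℓ x

lemma pdList_convolution [CompleteSpace E] (hw : Integrable w) (hV : ContDiff ℝ m V)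
    (hA : ∀ ℓ : List (Fin d), ℓ.length ≤ m → ∀ x, ‖pdList ℓ V x‖ ≤ A) :
    ∀ ℓ : List (Fin d), ℓ.length ≤ m → pdList ℓ (w ⋆ V) = w ⋆ pdList ℓ V
  | [], _ => rfl
  | j :: ℓ, hℓ => by
      rw [pdList_cons, pdList_convolution hw hV hA ℓ (Nat.le_of_succ_le hℓ),
        pd_convolution hw (hV.pdList ℓ hℓ) (hA ℓ (Nat.le_of_succ_le hℓ))
          (norm_fderiv_pdList_le hA ℓ hℓ)]
      rfl

lemma partialsDifferentiable_convolution [CompleteSpace E] (hw : Integrable w)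
    (hV : ContDiff ℝ m V) (hA : ∀ ℓ : List (Fin d), ℓ.length ≤ m → ∀ x, ‖pdList ℓ V x‖ ≤ A) :
    PartialsDifferentiable m (w ⋆ V) := fun ℓ hℓ => by
  rw [pdList_convolution hw hV hA ℓ hℓ.le]
  exact fun x => (hasFDerivAt_convolution hw (hV.pdList ℓ hℓ) (hA ℓ hℓ.le)
    (norm_fderiv_pdList_le hA ℓ hℓ) x).differentiableAt

lemma continuous_convolution (hw : Integrable w) (hV : Continuous V) (hB : ∀ x, ‖V x‖ ≤ B) :
    Continuous (w ⋆ V) :=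
  BddAbove.continuous_convolution_right_of_integrable _
    ⟨B, by rintro _ ⟨x, rfl⟩; exact hB x⟩ hw hV

lemma convolution_eq_integral_mul (w V : (Fin d → ℝ) → ℝ) (x : Fin d → ℝ) :
    (w ⋆ V) x = ∫ y, V (x - y) * w y := by
  simp [convolution_def, mul_comm]

end Convolution

section Multiplier

lemma eLpNorm_list_sum_le {α F : Type*} [MeasurableSpace α] [NormedAddCommGroup F]
    {μ : Measure α} {p : ℝ≥0∞} (hp : 1 ≤ p) {L : List (α → F)}
    (hL : ∀ f ∈ L, AEStronglyMeasurable f μ) :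
    eLpNorm L.sum p μ ≤ (L.map fun f => eLpNorm f p μ).sum := by
  induction L with
  | nil => simp
  | cons f L ih =>
      simp only [List.forall_mem_cons] at hL
      rw [List.sum_cons, List.map_cons, List.sum_cons]
      exact (eLpNorm_add_le hL.1 (L.aestronglyMeasurable_sum hL.2) hp).trans
        (add_le_add le_rfl (ih hL.2))

lemma eLpNorm_md_add_le [CompleteSpace E] [MeasurableSpace E] [BorelSpace E]
    [SecondCountableTopology E] {m : ℕ} {f g : (Fin d → ℝ) → E}
    (hf : PartialsDifferentiable m f) (hg : PartialsDifferentiable m g)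
    (hfm : AEStronglyMeasurable f volume) (hgm : AEStronglyMeasurable g volume)
    {γ : Fin d → ℕ} (hγ : ∑ i, γ i ≤ m) :
    eLpNorm (md γ (f + g)) 2 volume ≤ eLpNorm (md γ f) 2 volume + eLpNorm (md γ g) 2 volume := by
  simp only [md_eq_pdList]
  rw [pdList_add hf hg _ ((length_multiIndexList γ).trans_le hγ)]
  exact eLpNorm_add_le (aestronglyMeasurable_pdList hfm _) (aestronglyMeasurable_pdList hgm _)
    one_le_two

variable {m : ℕ} {φ : (Fin d → ℝ) → ℝ} {f : (Fin d → ℝ) → E} {K : ℝ}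

lemma eLpNorm_smul_pdList_le (hφm : AEStronglyMeasurable φ volume)
    (hK : ∀ ℓ : List (Fin d), ℓ.length ≤ m → ∀ x, ‖pdList ℓ φ x‖ ≤ K)
    (hf : ContDiffL2 d m f) {ℓ₁ ℓ₂ : List (Fin d)} (hℓ : ℓ₁.length + ℓ₂.length ≤ m) :
    AEStronglyMeasurable (pdList ℓ₁ φ • pdList ℓ₂ f) volume ∧
      eLpNorm (pdList ℓ₁ φ • pdList ℓ₂ f) 2 volume ≤ ENNReal.ofReal (K * hnorm d m f) := by
  have hK0 : 0 ≤ K := (norm_nonneg _).trans (hK [] (Nat.zero_le _) 0)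
  refine ⟨(aestronglyMeasurable_pdList hφm ℓ₁).smul
    (hf.1.pdList ℓ₂ (k := 0) (by omega)).continuous.aestronglyMeasurable, ?_⟩
  calc eLpNorm (pdList ℓ₁ φ • pdList ℓ₂ f) 2 volume
      ≤ ENNReal.ofReal K * eLpNorm (pdList ℓ₂ f) 2 volume :=
        eLpNorm_le_mul_eLpNorm_of_ae_le_mul (ae_of_all _ fun x => by
          rw [Pi.smul_apply', norm_smul]
          exact mul_le_mul_of_nonneg_right (hK ℓ₁ (by omega) x) (norm_nonneg _)) 2
    _ ≤ ENNReal.ofReal K * ENNReal.ofReal (hnorm d m f) := by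
        gcongr
        exact hf.eLpNorm_pdList_le ℓ₂ (by omega)
    _ = ENNReal.ofReal (K * hnorm d m f) := (ENNReal.ofReal_mul hK0).symm

lemma eLpNorm_md_smul_le (hφ : PartialsDifferentiable m φ) (hφm : AEStronglyMeasurable φ volume)
    (hK : ∀ ℓ : List (Fin d), ℓ.length ≤ m → ∀ x, ‖pdList ℓ φ x‖ ≤ K)
    (hf : ContDiffL2 d m f) {γ : Fin d → ℕ} (hγ : ∑ i, γ i ≤ m) :
    eLpNorm (md γ (φ • f)) 2 volume ≤ ENNReal.ofReal (2 ^ m * K * hnorm d m f) := by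
  set ℓ := multiIndexList γ
  have hℓ : ℓ.length ≤ m := (length_multiIndexList γ).trans_le hγ
  have hterm (p) (hp : p ∈ bipartitions ℓ) := eLpNorm_smul_pdList_le hφm hK hf
    ((length_add_length_of_mem_bipartitions hp).trans_le hℓ)
  rw [md_eq_pdList, pdList_smul hφ hf.1.partialsDifferentiable ℓ hℓ]
  have hmem {g} (hg : g ∈ (bipartitions ℓ).map fun p => pdList p.1 φ • pdList p.2 f) :=
    List.mem_map.1 hg
  calc eLpNorm ((bipartitions ℓ).map fun p => pdList p.1 φ • pdList p.2 f).sum 2 volume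
      ≤ (((bipartitions ℓ).map fun p => pdList p.1 φ • pdList p.2 f).map
          fun g => eLpNorm g 2 volume).sum :=
        eLpNorm_list_sum_le one_le_two fun g hg => by
          obtain ⟨p, hp, rfl⟩ := hmem hg
          exact (hterm p hp).1
    _ ≤ (bipartitions ℓ).length • ENNReal.ofReal (K * hnorm d m f) := by
        refine (List.sum_le_card_nsmul _ (ENNReal.ofReal (K * hnorm d m f))
          fun x hx => ?_).trans_eq (by simp)
        obtain ⟨g, hg, rfl⟩ := List.mem_map.1 hx
        obtain ⟨p, hp, rfl⟩ := hmem hg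
        exact (hterm p hp).2
    _ ≤ ENNReal.ofReal (2 ^ m * K * hnorm d m f) := by
        rw [length_bipartitions, nsmul_eq_mul, mul_assoc,
          ENNReal.ofReal_mul (by positivity : (0 : ℝ) ≤ 2 ^ m), ENNReal.ofReal_pow zero_le_two,
          ENNReal.ofReal_ofNat, Nat.cast_pow, Nat.cast_ofNat]
        gcongr
        exact one_le_two

lemma eLpNorm_md_convolution_smul_le {V w : (Fin d → ℝ) → ℝ} {A : ℝ} (hV : ContDiff ℝ m V)
    (hA : ∀ ℓ : List (Fin d), ℓ.length ≤ m → ∀ x, ‖pdList ℓ V x‖ ≤ A)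
    (hw : Integrable w volume) (hf : ContDiffL2 d m f) {γ : Fin d → ℕ} (hγ : ∑ i, γ i ≤ m) :
    eLpNorm (md γ ((w ⋆ V) • f)) 2 volume
      ≤ ENNReal.ofReal (2 ^ m * (A * ∫ y, ‖w y‖) * hnorm d m f) :=
  eLpNorm_md_smul_le (partialsDifferentiable_convolution hw hV hA)
    (continuous_convolution hw hV.continuous (hA [] (Nat.zero_le _))).aestronglyMeasurable
    (fun ℓ hℓ x => by
      rw [pdList_convolution hw hV hA ℓ hℓ]
      exact norm_convolution_le hw (hA ℓ hℓ) x)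
    hf hγ

lemma hnorm_convolution_smul_add_le [CompleteSpace E] [MeasurableSpace E] [BorelSpace E]
    [SecondCountableTopology E] {V w₁ w₂ : (Fin d → ℝ) → ℝ} {f₁ f₂ : (Fin d → ℝ) → E}
    {A : ℝ} (hV : ContDiff ℝ m V) (hA : ∀ ℓ : List (Fin d), ℓ.length ≤ m → ∀ x, ‖pdList ℓ V x‖ ≤ A)
    (hw₁ : Integrable w₁ volume) (hw₂ : Integrable w₂ volume)
    (hf₁ : ContDiffL2 d m f₁) (hf₂ : ContDiffL2 d m f₂) :
    hnorm d m ((w₁ ⋆ V) • f₁ + (w₂ ⋆ V) • f₂) ≤ √((m + 1) ^ d) *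
      (2 ^ m * A * ((∫ y, ‖w₁ y‖) * hnorm d m f₁ + (∫ y, ‖w₂ y‖) * hnorm d m f₂)) := by
  have hA0 : 0 ≤ A := (norm_nonneg _).trans (hA [] (Nat.zero_le _) 0)
  have hH₁ := hnorm_nonneg (m := m) f₁
  have hH₂ := hnorm_nonneg (m := m) f₂
  have hφ {w : (Fin d → ℝ) → ℝ} (hw : Integrable w volume) :
      PartialsDifferentiable m (w ⋆ V) ∧ AEStronglyMeasurable (w ⋆ V) volume :=
    ⟨partialsDifferentiable_convolution hw hV hA,
      (continuous_convolution hw hV.continuous (hA [] (Nat.zero_le _))).aestronglyMeasurable⟩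
  have hf₁m := hf₁.1.continuous.aestronglyMeasurable (μ := volume)
  have hf₂m := hf₂.1.continuous.aestronglyMeasurable (μ := volume)
  refine hnorm_le_of_eLpNorm_md_le (by positivity) fun γ hγ => ?_
  calc eLpNorm (md γ ((w₁ ⋆ V) • f₁ + (w₂ ⋆ V) • f₂)) 2 volume
      ≤ eLpNorm (md γ ((w₁ ⋆ V) • f₁)) 2 volume + eLpNorm (md γ ((w₂ ⋆ V) • f₂)) 2 volume :=
        eLpNorm_md_add_le ((hφ hw₁).1.smul hf₁.1.partialsDifferentiable)
          ((hφ hw₂).1.smul hf₂.1.partialsDifferentiable) ((hφ hw₁).2.smul hf₁m)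
          ((hφ hw₂).2.smul hf₂m) hγ
    _ ≤ ENNReal.ofReal (2 ^ m * (A * ∫ y, ‖w₁ y‖) * hnorm d m f₁)
        + ENNReal.ofReal (2 ^ m * (A * ∫ y, ‖w₂ y‖) * hnorm d m f₂) :=
        add_le_add (eLpNorm_md_convolution_smul_le hV hA hw₁ hf₁ hγ)
          (eLpNorm_md_convolution_smul_le hV hA hw₂ hf₂ hγ)
    _ = ENNReal.ofReal
          (2 ^ m * A * ((∫ y, ‖w₁ y‖) * hnorm d m f₁ + (∫ y, ‖w₂ y‖) * hnorm d m f₂)) := by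
        rw [← ENNReal.ofReal_add (by positivity) (by positivity)]
        ring_nf

end Multiplier

section WeightBounds

variable {F G : Type*} [NormedAddCommGroup F] [NormedAddCommGroup G]
  {u : (Fin d → ℝ) → F} {v : (Fin d → ℝ) → G}

lemma integral_norm_mul_norm_le (hu : MemLp u 2 volume) (hv : MemLp v 2 volume) :
    ∫ y, ‖u y‖ * ‖v y‖ ≤ l2norm u * l2norm v := by
  have key := integral_mul_norm_le_Lp_mul_Lq (μ := volume) Real.HolderConjugate.two_two
    (f := fun y => ‖u y‖) (g := fun y => ‖v y‖) (by simpa using hu.norm) (by simpa using hv.norm)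
  rw [l2norm, l2norm, hu.eLpNorm_eq_integral_rpow_norm two_ne_zero ENNReal.ofNat_ne_top,
    hv.eLpNorm_eq_integral_rpow_norm two_ne_zero ENNReal.ofNat_ne_top,
    ENNReal.toReal_ofReal (by positivity), ENNReal.toReal_ofReal (by positivity)]
  simpa using key

lemma integrable_and_integral_norm_le {w : (Fin d → ℝ) → ℝ} {c : ℝ} (hu : MemLp u 2 volume)
    (hv : MemLp v 2 volume) (hw : AEStronglyMeasurable w volume) (hc : 0 ≤ c)
    (hwle : ∀ y, ‖w y‖ ≤ c * (‖u y‖ * ‖v y‖)) :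
    Integrable w volume ∧ ∫ y, ‖w y‖ ≤ c * (l2norm u * l2norm v) := by
  have huv : Integrable (fun y => ‖u y‖ * ‖v y‖) volume := hu.norm.integrable_mul hv.norm
  refine ⟨(huv.const_mul c).mono' hw (ae_of_all _ hwle), ?_⟩
  calc ∫ y, ‖w y‖ ≤ ∫ y, c * (‖u y‖ * ‖v y‖) :=
        integral_mono_of_nonneg (ae_of_all _ fun _ => norm_nonneg _) (huv.const_mul c)
          (ae_of_all _ hwle)
    _ ≤ c * (l2norm u * l2norm v) := by
        rw [integral_const_mul]
        exact mul_le_mul_of_nonneg_left (integral_norm_mul_norm_le hu hv) hc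

end WeightBounds

lemma hartree_derivative_eq_convolution_smul (V : (Fin d → ℝ) → ℝ) (u h : (Fin d → ℝ) → ℂ) :
    (fun x => ((∫ y, V (x - y) * ‖u y‖ ^ 2 : ℝ) : ℂ) * h x
      + 2 * ((∫ y, V (x - y) * (starRingEnd ℂ (u y) * h y).re : ℝ) : ℂ) * u x)
      = ((fun y => ‖u y‖ ^ 2) ⋆ V) • h
        + ((fun y => 2 * (starRingEnd ℂ (u y) * h y).re) ⋆ V) • u := by
  funext x
  simp only [Pi.add_apply, Pi.smul_apply', convolution_eq_integral_mul, Complex.real_smul,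
    mul_left_comm _ (2 : ℝ), integral_const_mul]
  push_cast
  ring

end

theorem statement5_general (d m : ℕ) (V : (Fin d → ℝ) → ℝ)
    (hV : ContDiffBdd d m V) :
    ∃ C : ℝ, 0 < C ∧ ∀ u h : (Fin d → ℝ) → ℂ,
      ContDiffL2 d m u → ContDiffL2 d m h →
      hnorm d m (fun x => ((∫ y, V (x - y) * ‖u y‖ ^ 2 : ℝ) : ℂ) * h x
          + 2 * ((∫ y, V (x - y) * (starRingEnd ℂ (u y) * h y).re : ℝ) : ℂ) * u x)
        ≤ C * l2norm u * hnorm d m u * hnorm d m h := by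
  obtain ⟨A, hA0, hA⟩ := hV.exists_bound_pdList
  refine ⟨√((m + 1) ^ d) * (2 ^ m * 3 * A), by positivity, fun u h hu hh => ?_⟩
  have hu_c : Continuous u := hu.1.continuous
  have hh_c : Continuous h := hh.1.continuous
  obtain ⟨hw₁, hw₁_le⟩ := integrable_and_integral_norm_le (c := 1) (w := fun y => ‖u y‖ ^ 2)
    hu.memLp hu.memLp (by fun_prop) zero_le_one fun y => by simp [sq]
  obtain ⟨hw₂, hw₂_le⟩ := integrable_and_integral_norm_le
    (c := 2) (w := fun y => 2 * (starRingEnd ℂ (u y) * h y).re) hu.memLp hh.memLp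
    (by fun_prop) zero_le_two fun y => by
      rw [norm_mul, Real.norm_ofNat]
      gcongr
      exact (Complex.abs_re_le_norm _).trans_eq (by simp)
  have hP := l2norm_nonneg u
  have hHU := hnorm_nonneg (m := m) u
  have hHH := hnorm_nonneg (m := m) h
  rw [hartree_derivative_eq_convolution_smul]
  refine (hnorm_convolution_smul_add_le hV.1 hA hw₁ hw₂ hh hu).trans ?_
  calc _ ≤ √((m + 1) ^ d) * (2 ^ m * A * (1 * (l2norm u * hnorm d m u) * hnorm d m h
          + 2 * (l2norm u * hnorm d m h) * hnorm d m u)) := by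
        gcongr
        · exact hw₁_le.trans (by gcongr; exact l2norm_le_hnorm u)
        · exact hw₂_le.trans (by gcongr; exact l2norm_le_hnorm h)
    _ = _ := by ring

theorem statement5 (d m : ℕ) (hd : 1 ≤ d) (V : (Fin d → ℝ) → ℝ)
    (hV : ContDiffBdd d m V) :
    ∃ C : ℝ, 0 < C ∧ ∀ u h : (Fin d → ℝ) → ℂ,
      ContDiffL2 d m u → ContDiffL2 d m h →
      hnorm d m (fun x => ((∫ y, V (x - y) * ‖u y‖ ^ 2 : ℝ) : ℂ) * h x
          + 2 * ((∫ y, V (x - y) * (starRingEnd ℂ (u y) * h y).re : ℝ) : ℂ) * u x)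
        ≤ C * l2norm u * hnorm d m u * hnorm d m h :=
  statement5_general d m V hV
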